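/- Let F be a pointwise almost periodic decomposition of a compact metrizable space X, and let F̂ denote the decomposition of closures. Then the following are equivalent: (1) F is R-closed; (2) F̂ is upper semicontinuous; (3) the quotient space X/F̂ is Hausdorff. -/

import Mathlib

open Set Topology

/-- `F` is a decomposition of `X`: a family of pairwise disjoint nonempty
subsets whose union is `X`. -/
def IsDecomposition {X : Type*} (F : Set (Set X)) : Prop :=
  (∀ A ∈ F, A.Nonempty) ∧ (∀ A ∈ F, ∀ B ∈ F, A ≠ B → Disjoint A B) ∧ ⋃₀ F = Set.univ

/-- `F` is R-closed: `{(x,y) : y ∈ closure (F(x))}` is closed. -/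
def RClosed {X : Type*} [TopologicalSpace X] (F : Set (Set X)) : Prop :=
  IsClosed {p : X × X | ∃ A ∈ F, p.1 ∈ A ∧ p.2 ∈ closure A}

/-- `F` is pointwise almost periodic: the closures of elements of `F` again
form a decomposition, i.e. closures of distinct elements are equal or disjoint. -/
def PtwiseAP {X : Type*} [TopologicalSpace X] (F : Set (Set X)) : Prop :=
  ∀ A ∈ F, ∀ B ∈ F, closure A = closure B ∨ Disjoint (closure A) (closure B)

/-- `V` is saturated for the decomposition of closures `F̂`. -/
def SaturatedHat {X : Type*} [TopologicalSpace X] (F : Set (Set X)) (V : Set X) : Prop :=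
  ∀ A ∈ F, ¬ Disjoint (closure A) V → closure A ⊆ V

/-- The decomposition of closures `F̂` is upper semicontinuous: elements are
compact (and closed), and every open neighbourhood of an element contains a
saturated neighbourhood of that element. -/
def USCHat {X : Type*} [TopologicalSpace X] (F : Set (Set X)) : Prop :=
  (∀ A ∈ F, IsCompact (closure A)) ∧
  ∀ A ∈ F, ∀ U : Set X, IsOpen U → closure A ⊆ U →
    ∃ V : Set X, SaturatedHat F V ∧ closure A ⊆ interior V ∧ V ⊆ U

/-!
Under pointwise almost periodicity, lying in a common member of `F̂` is an equivalence relation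
whose graph is exactly the set defining R-closedness, so all three conditions are properties of
this relation. On a compact space, a relation with closed graph has open "saturated interiors"
`{x | every y related to x lies in U}` for open `U`, because their complements are projections of
compact sets. These saturated open sets give upper semicontinuity and separate distinct classes in
the quotient. Conversely, a saturated neighbourhood, or the closed diagonal of a Hausdorff quotient,
shows that the complement of the graph is open.
-/

section ClosedRelation

variable {X : Type*} [TopologicalSpace X] {r : X → X → Prop}

lemma isOpen_setOf_forall_rel_imp_mem [CompactSpace X] (hr : IsClosed {p : X × X | r p.1 p.2})
    {U : Set X} (hU : IsOpen U) : IsOpen {x | ∀ y, r x y → y ∈ U} := by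
  have hproj : {x | ∀ y, r x y → y ∈ U}ᶜ =
      Prod.fst '' ({p : X × X | r p.1 p.2} ∩ univ ×ˢ Uᶜ) := by
    ext x
    simp
  rw [← isClosed_compl_iff, hproj]
  exact isClosedMap_fst_of_compactSpace _ (hr.inter (isClosed_univ.prod hU.isClosed_compl))

lemma t2Space_quot_of_isClosed [CompactSpace X] [NormalSpace X] (hr : Equivalence r)
    (hc : IsClosed {p : X × X | r p.1 p.2}) : T2Space (Quot r) := by
  refine ⟨fun a b hab => ?_⟩
  obtain ⟨x, rfl⟩ := Quot.exists_rep a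
  obtain ⟨y, rfl⟩ := Quot.exists_rep b
  have hclass (x : X) : IsClosed {z | r z x} :=
    hc.preimage (continuous_id.prodMk continuous_const)
  have hdisj : Disjoint {z | r z x} {z | r z y} :=
    disjoint_left.2 fun z hzx hzy => hab (Quot.sound (hr.trans (hr.symm hzx) hzy))
  obtain ⟨U, W, hU, hW, hxU, hyW, hUW⟩ := normal_separation (hclass x) (hclass y) hdisj
  let classesIn (U : Set X) : Set (Quot r) := {q | ∀ z, q = Quot.mk r z → z ∈ U}
  have hopen {U : Set X} (hU : IsOpen U) : IsOpen (classesIn U) := by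
    rw [isOpen_coinduced]
    simpa [classesIn, hr.quot_mk_eq_iff] using isOpen_setOf_forall_rel_imp_mem hc hU
  refine ⟨classesIn U, classesIn W, hopen hU, hopen hW,
    fun z hz => hxU (hr.symm ((hr.quot_mk_eq_iff _ _).1 hz)),
    fun z hz => hyW (hr.symm ((hr.quot_mk_eq_iff _ _).1 hz)), disjoint_left.2 fun q hqU hqW => ?_⟩
  obtain ⟨z, rfl⟩ := Quot.exists_rep q
  exact disjoint_left.1 hUW (hqU z rfl) (hqW z rfl)

lemma isClosed_of_t2Space_quot (hr : Equivalence r) [T2Space (Quot r)] :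
    IsClosed {p : X × X | r p.1 p.2} := by
  have hgraph : {p : X × X | r p.1 p.2} =
      (fun p : X × X => (Quot.mk r p.1, Quot.mk r p.2)) ⁻¹' diagonal (Quot r) := by
    ext
    simp [hr.quot_mk_eq_iff]
  rw [hgraph]
  exact isClosed_diagonal.preimage (by fun_prop)

end ClosedRelation

lemma IsDecomposition.exists_mem {X : Type*} {F : Set (Set X)} (hF : IsDecomposition F) (x : X) :
    ∃ A ∈ F, x ∈ A :=
  mem_sUnion.1 (hF.2.2 ▸ mem_univ x)

section Decomposition

variable {X : Type*} [TopologicalSpace X] {F : Set (Set X)}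

def closureRel (F : Set (Set X)) (x y : X) : Prop :=
  ∃ A ∈ F, x ∈ closure A ∧ y ∈ closure A

lemma PtwiseAP.mem_closure_of_closureRel (hap : PtwiseAP F) {A : Set X} (hA : A ∈ F) {x y : X}
    (hx : x ∈ closure A) (hxy : closureRel F x y) : y ∈ closure A := by
  obtain ⟨B, hB, hxB, hyB⟩ := hxy
  rcases hap A hA B hB with h | h
  · exact h ▸ hyB
  · exact absurd hxB (disjoint_left.1 h hx)

lemma closureRel_equivalence (hF : IsDecomposition F) (hap : PtwiseAP F) :
    Equivalence (closureRel F) where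
  refl x :=
    let ⟨A, hA, hx⟩ := hF.exists_mem x
    ⟨A, hA, subset_closure hx, subset_closure hx⟩
  symm := fun ⟨A, hA, hx, hy⟩ => ⟨A, hA, hy, hx⟩
  trans := fun ⟨A, hA, hx, hy⟩ hyz => ⟨A, hA, hx, hap.mem_closure_of_closureRel hA hy hyz⟩

lemma rClosed_iff_isClosed_closureRel (hF : IsDecomposition F) (hap : PtwiseAP F) :
    RClosed F ↔ IsClosed {p : X × X | closureRel F p.1 p.2} := by
  suffices {p : X × X | ∃ A ∈ F, p.1 ∈ A ∧ p.2 ∈ closure A} = {p | closureRel F p.1 p.2} by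
    rw [RClosed, this]
  ext ⟨x, y⟩
  refine ⟨fun ⟨A, hA, hx, hy⟩ => ⟨A, hA, subset_closure hx, hy⟩, fun hxy => ?_⟩
  obtain ⟨B, hB, hxB⟩ := hF.exists_mem x
  exact ⟨B, hB, hxB, hap.mem_closure_of_closureRel hB (subset_closure hxB) hxy⟩

lemma uscHat_of_isClosed_closureRel [CompactSpace X] (hF : IsDecomposition F) (hap : PtwiseAP F)
    (hc : IsClosed {p : X × X | closureRel F p.1 p.2}) : USCHat F := by
  have hequiv := closureRel_equivalence hF hap
  refine ⟨fun A _ => isClosed_closure.isCompact, fun A hA U hU hAU => ?_⟩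
  refine ⟨{x | ∀ y, closureRel F x y → y ∈ U}, ?_, ?_, fun x hx => hx x (hequiv.refl x)⟩
  · intro B hB hBV w hw y hwy
    obtain ⟨z, hzB, hzV⟩ := not_disjoint_iff.1 hBV
    exact hzV y (hequiv.trans ⟨B, hB, hzB, hw⟩ hwy)
  · rw [(isOpen_setOf_forall_rel_imp_mem hc hU).interior_eq]
    exact fun x hx y hxy => hAU (hap.mem_closure_of_closureRel hA hx hxy)

lemma USCHat.isClosed_closureRel [RegularSpace X] (hF : IsDecomposition F) (h : USCHat F) :
    IsClosed {p : X × X | closureRel F p.1 p.2} := by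
  refine isOpen_compl_iff.1 (isOpen_iff_forall_mem_open.2 fun ⟨x, y⟩ hxy => ?_)
  obtain ⟨A, hA, hxA⟩ := hF.exists_mem x
  have hyA : y ∉ closure A := fun hy => hxy ⟨A, hA, subset_closure hxA, hy⟩
  obtain ⟨W, U, hW, hU, hyW, hAU, hWU⟩ := SeparatedNhds.of_isCompact_isClosed
    isCompact_singleton isClosed_closure (disjoint_singleton_left.2 hyA)
  obtain ⟨V, hVsat, hAV, hVU⟩ := h.2 A hA U hU hAU
  refine ⟨interior V ×ˢ W, ?_, isOpen_interior.prod hW, hAV (subset_closure hxA), hyW rfl⟩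
  rintro ⟨x', y'⟩ ⟨hx', hy'⟩ ⟨B, hB, hx'B, hy'B⟩
  have hBV : closure B ⊆ V := hVsat B hB (not_disjoint_iff.2 ⟨x', hx'B, interior_subset hx'⟩)
  exact disjoint_left.1 hWU hy' (hVU (hBV hy'B))

end Decomposition

theorem stmt2 {X : Type*} [TopologicalSpace X] [TopologicalSpace.MetrizableSpace X] [CompactSpace X]
    (F : Set (Set X)) (hF : IsDecomposition F) (hap : PtwiseAP F) :
    List.TFAE [RClosed F, USCHat F,
      T2Space (Quot (fun x y : X => ∃ A ∈ F, x ∈ closure A ∧ y ∈ closure A))] := by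
  have hequiv := closureRel_equivalence hF hap
  have hR := rClosed_iff_isClosed_closureRel hF hap
  tfae_have 1 ↔ 2 :=
    hR.trans ⟨uscHat_of_isClosed_closureRel hF hap, USCHat.isClosed_closureRel hF⟩
  tfae_have 1 ↔ 3 :=
    hR.trans ⟨t2Space_quot_of_isClosed hequiv, fun h => @isClosed_of_t2Space_quot _ _ _ hequiv h⟩
  tfae_finish
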